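/- (Lemma 2, boundedness.) Under Assumption 1, any sequence (x^k, u^k)_{k∈ℕ} generated by the Unifying AM algorithm is bounded. -/

import Mathlib

open scoped RealInnerProductSpace BigOperators
open Finset

/-- The smooth surrogate objective `G(x,u)`. -/
noncomputable def objG (n N m : ℕ)
    (E1 : Finset (Fin N × Fin N)) (E2 : Finset (Fin N × Fin m))
    (a : Fin m → EuclideanSpace ℝ (Fin n))
    (d1 : Fin N × Fin N → ℝ) (d2 : Fin N × Fin m → ℝ)
    (x : Fin N → EuclideanSpace ℝ (Fin n))
    (u1 : Fin N × Fin N → EuclideanSpace ℝ (Fin n))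
    (u2 : Fin N × Fin m → EuclideanSpace ℝ (Fin n)) : ℝ :=
  (∑ e ∈ E1, (‖x e.1 - x e.2‖ ^ 2 - 2 * d1 e * ⟪u1 e, x e.1 - x e.2⟫)) +
  ∑ e ∈ E2, (‖x e.1 - a e.2‖ ^ 2 - 2 * d2 e * ⟪u2 e, x e.1 - a e.2⟫)

/-- The relation of the network graph on vertices `V ∪ A = Fin N ⊕ Fin m`. -/
def netRel (N m : ℕ) (E1 : Finset (Fin N × Fin N)) (E2 : Finset (Fin N × Fin m)) :
    (Fin N ⊕ Fin m) → (Fin N ⊕ Fin m) → Prop := fun p q =>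
  match p, q with
  | Sum.inl i, Sum.inl j => (i, j) ∈ E1
  | Sum.inl i, Sum.inr j => (i, j) ∈ E2
  | _, _ => False

/-- `(x^k, u^k)` is a sequence generated by the Unifying AM algorithm with
clusters `C 0, …, C (q−1)`:
* the initial `u^0` is feasible (each `u^0_{ij}` in the closed unit ball);
* the sensor update produces `x^{k+1}` from `x^k` through intermediate
  configurations `z 0 = x^k, …, z q = x^{k+1}`, where `z (l+1)` agrees with
  `z l` off the cluster `C l` and minimizes `G(·, u^k)` over all
  configurations agreeing with `z l` off `C l`;
* the auxiliary update sets `u^{k+1}_{ij} = v^{k+1}_{ij}/‖v^{k+1}_{ij}‖` when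
  `v^{k+1}_{ij} ≠ 0` and `0` otherwise (both cases captured by `‖v‖⁻¹ • v`,
  since `(0:ℝ)⁻¹ = 0`). -/
def IsAMSeq (n N m : ℕ)
    (E1 : Finset (Fin N × Fin N)) (E2 : Finset (Fin N × Fin m))
    (a : Fin m → EuclideanSpace ℝ (Fin n))
    (d1 : Fin N × Fin N → ℝ) (d2 : Fin N × Fin m → ℝ)
    (q : ℕ) (C : Fin q → Finset (Fin N))
    (x : ℕ → Fin N → EuclideanSpace ℝ (Fin n))
    (u1 : ℕ → Fin N × Fin N → EuclideanSpace ℝ (Fin n))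
    (u2 : ℕ → Fin N × Fin m → EuclideanSpace ℝ (Fin n)) : Prop :=
  (∀ e ∈ E1, ‖u1 0 e‖ ≤ 1) ∧ (∀ e ∈ E2, ‖u2 0 e‖ ≤ 1) ∧
  (∀ k : ℕ, ∃ z : Fin (q + 1) → Fin N → EuclideanSpace ℝ (Fin n),
    z 0 = x k ∧ z (Fin.last q) = x (k + 1) ∧
    ∀ l : Fin q,
      (∀ i : Fin N, i ∉ C l → z l.succ i = z l.castSucc i) ∧
      (∀ w : Fin N → EuclideanSpace ℝ (Fin n),
        (∀ i : Fin N, i ∉ C l → w i = z l.castSucc i) →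
        objG n N m E1 E2 a d1 d2 (z l.succ) (u1 k) (u2 k) ≤
          objG n N m E1 E2 a d1 d2 w (u1 k) (u2 k))) ∧
  (∀ k : ℕ, ∀ e ∈ E1, u1 (k + 1) e =
    ‖x (k + 1) e.1 - x (k + 1) e.2‖⁻¹ • (x (k + 1) e.1 - x (k + 1) e.2)) ∧
  (∀ k : ℕ, ∀ e ∈ E2, u2 (k + 1) e =
    ‖x (k + 1) e.1 - a e.2‖⁻¹ • (x (k + 1) e.1 - a e.2))


/-!
The coordinate update and the normalisation of the auxiliary vectors both decrease the surrogate
`G`, so `G(x^k, u^k) ≤ G(x^0, u^0)` along the whole run, and every `u^k` stays in the unit ball.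
For `‖u‖ ≤ 1` the surrogate is coercive in the edge vectors:
`‖v‖² ≤ 2 (‖v‖² - 2 d ⟪u, v⟫) + 4 d²`, so every edge of the network has length bounded uniformly
in `k`. Connectivity then bounds the distance of each sensor to a fixed anchor by (number of
vertices) × (edge bound).
-/

section InnerProduct

variable {F : Type*} [NormedAddCommGroup F] [InnerProductSpace ℝ F]

lemma norm_inv_norm_smul_le_one (v : F) : ‖‖v‖⁻¹ • v‖ ≤ 1 := by
  rcases eq_or_ne v 0 with rfl | hv
  · simp
  · exact (norm_smul_inv_norm hv).le

lemma real_inner_inv_norm_smul_self (v : F) : ⟪‖v‖⁻¹ • v, v⟫ = ‖v‖ := by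
  rcases eq_or_ne v 0 with rfl | hv
  · simp
  · rw [real_inner_smul_left, real_inner_self_eq_norm_sq, sq,
      inv_mul_cancel_left₀ (norm_ne_zero_iff.mpr hv)]

lemma real_inner_le_norm_of_norm_le_one {u : F} (hu : ‖u‖ ≤ 1) (v : F) : ⟪u, v⟫ ≤ ‖v‖ :=
  (real_inner_le_norm u v).trans (mul_le_of_le_one_left (norm_nonneg v) hu)

lemma sq_norm_le_two_mul_sub_inner_add {u : F} (hu : ‖u‖ ≤ 1) (v : F) (d : ℝ) :
    ‖v‖ ^ 2 ≤ 2 * (‖v‖ ^ 2 - 2 * d * ⟪u, v⟫) + 4 * d ^ 2 := by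
  have hinner : d * ⟪u, v⟫ ≤ |d| * ‖v‖ := by
    calc d * ⟪u, v⟫ ≤ |d| * |⟪u, v⟫| := by rw [← abs_mul]; exact le_abs_self _
      _ ≤ |d| * ‖v‖ := by
        gcongr
        exact (abs_real_inner_le_norm u v).trans (mul_le_of_le_one_left (norm_nonneg v) hu)
  nlinarith [sq_nonneg (‖v‖ - 2 * |d|), sq_abs d]

end InnerProduct

lemma Finset.sum_sq_norm_le_card_mul {ι E : Type*} [SeminormedAddCommGroup E] (s : Finset ι)
    {f : ι → E} {R : ℝ} (hf : ∀ i ∈ s, ‖f i‖ ≤ R) : ∑ i ∈ s, ‖f i‖ ^ 2 ≤ #s * R ^ 2 := by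
  simpa [nsmul_eq_mul] using
    Finset.sum_le_card_nsmul s _ _ fun i hi => pow_le_pow_left₀ (norm_nonneg _) (hf i hi) 2

namespace SimpleGraph

variable {V E : Type*} [SeminormedAddCommGroup E] {G : SimpleGraph V} {f : V → E} {L : ℝ}

lemma Walk.norm_sub_le_length_mul (hf : ∀ p r, G.Adj p r → ‖f p - f r‖ ≤ L) {p r : V}
    (w : G.Walk p r) : ‖f p - f r‖ ≤ w.length * L := by
  induction w with
  | nil => simp
  | @cons p q r hpq w ih =>
    rw [Walk.length_cons, Nat.cast_succ, add_one_mul]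
    linarith [norm_sub_le_norm_sub_add_norm_sub (f p) (f q) (f r), hf p q hpq]

lemma Connected.norm_sub_le_card_mul [Fintype V] (hG : G.Connected) (hL : 0 ≤ L)
    (hf : ∀ p r, G.Adj p r → ‖f p - f r‖ ≤ L) (p r : V) :
    ‖f p - f r‖ ≤ Fintype.card V * L := by
  classical
  obtain ⟨w⟩ := hG.preconnected p r
  calc ‖f p - f r‖ ≤ w.toPath.val.length * L := Walk.norm_sub_le_length_mul hf _
    _ ≤ Fintype.card V * L := by
      gcongr
      exact_mod_cast w.toPath.prop.length_lt.le

end SimpleGraph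

section Network

variable {n N m : ℕ} {E1 : Finset (Fin N × Fin N)} {E2 : Finset (Fin N × Fin m)}
  {a : Fin m → EuclideanSpace ℝ (Fin n)} {d1 : Fin N × Fin N → ℝ} {d2 : Fin N × Fin m → ℝ}

noncomputable def edgeEnergy (E1 : Finset (Fin N × Fin N)) (E2 : Finset (Fin N × Fin m))
    (a : Fin m → EuclideanSpace ℝ (Fin n)) (x : Fin N → EuclideanSpace ℝ (Fin n)) : ℝ :=
  (∑ e ∈ E1, ‖x e.1 - x e.2‖ ^ 2) + ∑ e ∈ E2, ‖x e.1 - a e.2‖ ^ 2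

lemma sq_norm_le_edgeEnergy_of_mem_left (x : Fin N → EuclideanSpace ℝ (Fin n))
    {e : Fin N × Fin N} (he : e ∈ E1) : ‖x e.1 - x e.2‖ ^ 2 ≤ edgeEnergy E1 E2 a x :=
by
  have := single_le_sum (f := fun e => ‖x e.1 - x e.2‖ ^ 2) (fun _ _ => sq_nonneg _) he
  have := sum_nonneg (s := E2) fun e _ => sq_nonneg ‖x e.1 - a e.2‖
  unfold edgeEnergy
  linarith

lemma sq_norm_le_edgeEnergy_of_mem_right (x : Fin N → EuclideanSpace ℝ (Fin n))
    {e : Fin N × Fin m} (he : e ∈ E2) : ‖x e.1 - a e.2‖ ^ 2 ≤ edgeEnergy E1 E2 a x :=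
by
  have := single_le_sum (f := fun e => ‖x e.1 - a e.2‖ ^ 2) (fun _ _ => sq_nonneg _) he
  have := sum_nonneg (s := E1) fun e _ => sq_nonneg ‖x e.1 - x e.2‖
  unfold edgeEnergy
  linarith

lemma norm_sub_le_sqrt_edgeEnergy_of_adj (x : Fin N → EuclideanSpace ℝ (Fin n))
    {p r : Fin N ⊕ Fin m} (h : (SimpleGraph.fromRel (netRel N m E1 E2)).Adj p r) :
    ‖Sum.elim x a p - Sum.elim x a r‖ ≤ Real.sqrt (edgeEnergy E1 E2 a x) := by
  suffices ∀ p r, netRel N m E1 E2 p r →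
      ‖Sum.elim x a p - Sum.elim x a r‖ ≤ Real.sqrt (edgeEnergy E1 E2 a x) by
    obtain ⟨-, h | h⟩ := h
    · exact this p r h
    · rw [norm_sub_rev]
      exact this r p h
  rintro (i | i) (j | j) h
  · exact Real.le_sqrt_of_sq_le (sq_norm_le_edgeEnergy_of_mem_left (E2 := E2) (a := a) x
      (e := (i, j)) h)
  · exact Real.le_sqrt_of_sq_le (sq_norm_le_edgeEnergy_of_mem_right (E1 := E1) x
      (e := (i, j)) h)
  all_goals exact h.elim

section Surrogate

variable {x : Fin N → EuclideanSpace ℝ (Fin n)}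
  {u1 : Fin N × Fin N → EuclideanSpace ℝ (Fin n)} {u2 : Fin N × Fin m → EuclideanSpace ℝ (Fin n)}

lemma edgeEnergy_le_objG (hu1 : ∀ e ∈ E1, ‖u1 e‖ ≤ 1) (hu2 : ∀ e ∈ E2, ‖u2 e‖ ≤ 1) :
    edgeEnergy E1 E2 a x ≤ 2 * objG n N m E1 E2 a d1 d2 x u1 u2 +
      4 * ((∑ e ∈ E1, d1 e ^ 2) + ∑ e ∈ E2, d2 e ^ 2) := by
  unfold edgeEnergy objG
  calc _ ≤ (∑ e ∈ E1, (2 * (‖x e.1 - x e.2‖ ^ 2 - 2 * d1 e * ⟪u1 e, x e.1 - x e.2⟫)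
              + 4 * d1 e ^ 2)) +
            ∑ e ∈ E2, (2 * (‖x e.1 - a e.2‖ ^ 2 - 2 * d2 e * ⟪u2 e, x e.1 - a e.2⟫)
              + 4 * d2 e ^ 2) :=
        add_le_add
          (sum_le_sum fun e he => sq_norm_le_two_mul_sub_inner_add (hu1 e he) _ (d1 e))
          (sum_le_sum fun e he => sq_norm_le_two_mul_sub_inner_add (hu2 e he) _ (d2 e))
    _ = _ := by simp only [sum_add_distrib, ← mul_sum]; ring

lemma objG_normalize_le (hd1 : ∀ e ∈ E1, 0 ≤ d1 e) (hd2 : ∀ e ∈ E2, 0 ≤ d2 e)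
    (hu1 : ∀ e ∈ E1, ‖u1 e‖ ≤ 1) (hu2 : ∀ e ∈ E2, ‖u2 e‖ ≤ 1)
    {u1' : Fin N × Fin N → EuclideanSpace ℝ (Fin n)} {u2' : Fin N × Fin m → EuclideanSpace ℝ (Fin n)}
    (hu1' : ∀ e ∈ E1, u1' e = ‖x e.1 - x e.2‖⁻¹ • (x e.1 - x e.2))
    (hu2' : ∀ e ∈ E2, u2' e = ‖x e.1 - a e.2‖⁻¹ • (x e.1 - a e.2)) :
    objG n N m E1 E2 a d1 d2 x u1' u2' ≤ objG n N m E1 E2 a d1 d2 x u1 u2 := by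
  refine add_le_add (sum_le_sum fun e he => ?_) (sum_le_sum fun e he => ?_)
  · rw [hu1' e he, real_inner_inv_norm_smul_self]
    exact sub_le_sub_left (mul_le_mul_of_nonneg_left
      (real_inner_le_norm_of_norm_le_one (hu1 e he) _) (by linarith [hd1 e he])) _
  · rw [hu2' e he, real_inner_inv_norm_smul_self]
    exact sub_le_sub_left (mul_le_mul_of_nonneg_left
      (real_inner_le_norm_of_norm_le_one (hu2 e he) _) (by linarith [hd2 e he])) _

end Surrogate

namespace IsAMSeq

variable {q : ℕ} {C : Fin q → Finset (Fin N)} {x : ℕ → Fin N → EuclideanSpace ℝ (Fin n)}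
  {u1 : ℕ → Fin N × Fin N → EuclideanSpace ℝ (Fin n)}
  {u2 : ℕ → Fin N × Fin m → EuclideanSpace ℝ (Fin n)}

lemma norm_u1_le_one (h : IsAMSeq n N m E1 E2 a d1 d2 q C x u1 u2) :
    ∀ k, ∀ e ∈ E1, ‖u1 k e‖ ≤ 1
  | 0 => h.1
  | k + 1 => fun e he => h.2.2.2.1 k e he ▸ norm_inv_norm_smul_le_one _

lemma norm_u2_le_one (h : IsAMSeq n N m E1 E2 a d1 d2 q C x u1 u2) :
    ∀ k, ∀ e ∈ E2, ‖u2 k e‖ ≤ 1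
  | 0 => h.2.1
  | k + 1 => fun e he => h.2.2.2.2 k e he ▸ norm_inv_norm_smul_le_one _

lemma objG_sensorUpdate_le (h : IsAMSeq n N m E1 E2 a d1 d2 q C x u1 u2) (k : ℕ) :
    objG n N m E1 E2 a d1 d2 (x (k + 1)) (u1 k) (u2 k) ≤
      objG n N m E1 E2 a d1 d2 (x k) (u1 k) (u2 k) := by
  obtain ⟨z, hz0, hzq, hz⟩ := h.2.2.1 k
  -- each intermediate configuration is itself a competitor for the next block minimization
  have hanti : Antitone fun l => objG n N m E1 E2 a d1 d2 (z l) (u1 k) (u2 k) :=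
    Fin.antitone_iff_succ_le.mpr fun l => (hz l).2 _ fun _ _ => rfl
  simpa [hz0, hzq] using hanti (Fin.zero_le (Fin.last q))

lemma objG_succ_le (h : IsAMSeq n N m E1 E2 a d1 d2 q C x u1 u2)
    (hd1 : ∀ e ∈ E1, 0 ≤ d1 e) (hd2 : ∀ e ∈ E2, 0 ≤ d2 e) (k : ℕ) :
    objG n N m E1 E2 a d1 d2 (x (k + 1)) (u1 (k + 1)) (u2 (k + 1)) ≤
      objG n N m E1 E2 a d1 d2 (x k) (u1 k) (u2 k) :=
  (objG_normalize_le hd1 hd2 (h.norm_u1_le_one k) (h.norm_u2_le_one k) (h.2.2.2.1 k)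
    (h.2.2.2.2 k)).trans (h.objG_sensorUpdate_le k)

lemma edgeEnergy_le (h : IsAMSeq n N m E1 E2 a d1 d2 q C x u1 u2)
    (hd1 : ∀ e ∈ E1, 0 ≤ d1 e) (hd2 : ∀ e ∈ E2, 0 ≤ d2 e) (k : ℕ) :
    edgeEnergy E1 E2 a (x k) ≤ 2 * objG n N m E1 E2 a d1 d2 (x 0) (u1 0) (u2 0) +
      4 * ((∑ e ∈ E1, d1 e ^ 2) + ∑ e ∈ E2, d2 e ^ 2) := by
  have hG : objG n N m E1 E2 a d1 d2 (x k) (u1 k) (u2 k) ≤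
      objG n N m E1 E2 a d1 d2 (x 0) (u1 0) (u2 0) :=
    antitone_nat_of_succ_le (f := fun k => objG n N m E1 E2 a d1 d2 (x k) (u1 k) (u2 k))
      (h.objG_succ_le hd1 hd2) (Nat.zero_le k)
  linarith [edgeEnergy_le_objG (a := a) (x := x k) (d1 := d1) (d2 := d2) (h.norm_u1_le_one k)
    (h.norm_u2_le_one k)]

end IsAMSeq

end Network

theorem stmt12_general (n N m : ℕ)
    (E1 : Finset (Fin N × Fin N))
    (E2 : Finset (Fin N × Fin m))
    (a : Fin m → EuclideanSpace ℝ (Fin n))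
    (d1 : Fin N × Fin N → ℝ) (d2 : Fin N × Fin m → ℝ)
    (hd1 : ∀ e ∈ E1, 0 ≤ d1 e) (hd2 : ∀ e ∈ E2, 0 ≤ d2 e)
    (hconn : (SimpleGraph.fromRel (netRel N m E1 E2)).Connected)
    (hm : 1 ≤ m)
    (q : ℕ) (C : Fin q → Finset (Fin N))
    (x : ℕ → Fin N → EuclideanSpace ℝ (Fin n))
    (u1 : ℕ → Fin N × Fin N → EuclideanSpace ℝ (Fin n))
    (u2 : ℕ → Fin N × Fin m → EuclideanSpace ℝ (Fin n))
    (hAM : IsAMSeq n N m E1 E2 a d1 d2 q C x u1 u2) :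
    ∃ R : ℝ, ∀ k : ℕ,
      Real.sqrt ((∑ i, ‖x k i‖ ^ 2) +
        ((∑ e ∈ E1, ‖u1 k e‖ ^ 2) + ∑ e ∈ E2, ‖u2 k e‖ ^ 2)) ≤ R := by
  set L := Real.sqrt (2 * objG n N m E1 E2 a d1 d2 (x 0) (u1 0) (u2 0) +
    4 * ((∑ e ∈ E1, d1 e ^ 2) + ∑ e ∈ E2, d2 e ^ 2))
  let j₀ : Fin m := ⟨0, hm⟩
  set Rx := ‖a j₀‖ + (N + m) * L
  have hx : ∀ k i, ‖x k i‖ ≤ Rx := fun k i => by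
    have hdist := hconn.norm_sub_le_card_mul (Real.sqrt_nonneg _)
      (fun p r hpr => (norm_sub_le_sqrt_edgeEnergy_of_adj (x k) hpr).trans
        (Real.sqrt_le_sqrt (hAM.edgeEnergy_le hd1 hd2 k))) (Sum.inl i) (Sum.inr j₀)
    simp only [Sum.elim_inl, Sum.elim_inr, Fintype.card_sum, Fintype.card_fin,
      Nat.cast_add] at hdist
    linarith [norm_le_norm_add_norm_sub' (x k i) (a j₀)]
  refine ⟨Real.sqrt (N * Rx ^ 2 + (#E1 + #E2)), fun k => Real.sqrt_le_sqrt ?_⟩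
  gcongr
  · simpa using sum_sq_norm_le_card_mul univ fun i _ => hx k i
  · simpa using sum_sq_norm_le_card_mul E1 (hAM.norm_u1_le_one k)
  · simpa using sum_sq_norm_le_card_mul E2 (hAM.norm_u2_le_one k)

/-- Lemma 2 (boundedness): under Assumption 1, any sequence generated by the
Unifying AM algorithm is bounded. -/
theorem stmt12 (n N m : ℕ) (hn : 1 ≤ n) (hN : 1 ≤ N)
    (E1 : Finset (Fin N × Fin N)) (hE1 : ∀ e ∈ E1, e.1 < e.2)
    (E2 : Finset (Fin N × Fin m))
    (a : Fin m → EuclideanSpace ℝ (Fin n))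
    (d1 : Fin N × Fin N → ℝ) (d2 : Fin N × Fin m → ℝ)
    (hd1 : ∀ e ∈ E1, 0 ≤ d1 e) (hd2 : ∀ e ∈ E2, 0 ≤ d2 e)
    (hconn : (SimpleGraph.fromRel (netRel N m E1 E2)).Connected)
    (hm : 1 ≤ m)
    (q : ℕ) (C : Fin q → Finset (Fin N))
    (hCne : ∀ l, (C l).Nonempty)
    (hCdisj : ∀ l l', l ≠ l' → Disjoint (C l) (C l'))
    (hCcover : ∀ i : Fin N, ∃ l, i ∈ C l)
    (x : ℕ → Fin N → EuclideanSpace ℝ (Fin n))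
    (u1 : ℕ → Fin N × Fin N → EuclideanSpace ℝ (Fin n))
    (u2 : ℕ → Fin N × Fin m → EuclideanSpace ℝ (Fin n))
    (hAM : IsAMSeq n N m E1 E2 a d1 d2 q C x u1 u2) :
    ∃ R : ℝ, ∀ k : ℕ,
      Real.sqrt ((∑ i, ‖x k i‖ ^ 2) +
        ((∑ e ∈ E1, ‖u1 k e‖ ^ 2) + ∑ e ∈ E2, ‖u2 k e‖ ^ 2)) ≤ R :=
  stmt12_general n N m E1 E2 a d1 d2 hd1 hd2 hconn hm q C x u1 u2 hAM
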